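/- Lemma (determinant formula for a weighted partition sum): for sets w̄ and ξ̄ with #w̄ = #ξ̄ = m and arbitrary functions C1, C2 of one complex variable, ∑ K_m({w̄_I - c, w̄_II} | ξ̄) f(ξ̄, w̄_I) f(w̄_II, w̄_I) C1(w̄_I) C2(w̄_II) = Δ'_m(ξ̄) Δ_m(w̄) det_m( C2(w_k) t(w_k, ξ_j) h(w_k, ξ̄) + (-1)^m C1(w_k) t(ξ_j, w_k) h(ξ̄, w_k) ), where the sum is over all partitions of w̄ into w̄_I and w̄_II, and all functions applied to sets mean products. -/

import Mathlib

/-!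
Expanding the determinant on the right column by column (each column is a sum of a `C2` term and
a `C1` term) gives a sum over the sets `S` of columns that take the `C1` term. Since
`t(x - c, y) = t(y, x)`, the determinant of the `S`-th summand is `det t(u_j, ξ_k)` for the shifted
set `u = {w_S - c, w_Sᶜ}`, so only the prefactors remain to be matched: shifting `w_S` changes
`Δ'(w̄)` exactly by the cross factors `f(w_Sᶜ, w_S)`, and `h(x - c, y) f(y, x) = -h(y, x)` turns
`h(u, ξ̄) f(ξ̄, w_S)` into `h(w_Sᶜ, ξ̄) ∏_{k ∈ S} (-1)^m h(ξ̄, w_k)`; finally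
`Δ(ξ̄) Δ'(w̄) = Δ'(ξ̄) Δ(w̄)`, as both sides pick up the same sign from reversing all pairs.
-/

open Finset

noncomputable def gg (c u v : ℂ) : ℂ := c / (u - v)
noncomputable def ff (c u v : ℂ) : ℂ := (u - v + c) / (u - v)
noncomputable def hh (c u v : ℂ) : ℂ := (u - v + c) / c
noncomputable def tt (c u v : ℂ) : ℂ := gg c u v / hh c u v

/-- The domain wall partition function `K_m(ū|v̄)`. -/
noncomputable def KK (c : ℂ) {m : ℕ} (u v : Fin m → ℂ) : ℂ :=
  (∏ j, ∏ k ∈ univ.filter (fun k => j < k), gg c (u j) (u k)) *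
  (∏ j, ∏ k ∈ univ.filter (fun k => k < j), gg c (v j) (v k)) *
  (∏ j, ∏ k, hh c (u j) (v k)) *
  Matrix.det (Matrix.of fun j k => tt c (u j) (v k))

theorem Matrix.det_of_mul_add_mul_eq_sum {R n : Type*} [CommRing R] [Fintype n] [DecidableEq n]
    (a b : n → R) (A B : n → n → R) :
    (Matrix.of fun i j => a i * A i j + b i * B i j).det =
      ∑ s : Finset n, (∏ i ∈ s, a i) * (∏ i ∈ sᶜ, b i) *
        (Matrix.of fun i j => if i ∈ s then A i j else B i j).det := by
  have hrows := (detRowAlternating : (n → R) [⋀^n]→ₗ[R] R).toMultilinearMap.map_add_univ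
    (fun i => a i • A i) (fun i => b i • B i)
  refine hrows.trans (sum_congr rfl fun s _ => ?_)
  have hpiece : s.piecewise (fun i => a i • A i) (fun i => b i • B i) =
      fun i => s.piecewise a b i • fun j => if i ∈ s then A i j else B i j := by
    ext i j
    by_cases hi : i ∈ s <;> simp [hi]
  rw [hpiece, MultilinearMap.map_smul_univ, prod_piecewise, univ_inter, ← compl_eq_univ_sdiff]
  rfl

theorem prod_prod_filter_lt_swap {ι M : Type*} [Fintype ι] [LinearOrder ι] [CommMonoid M]
    (F : ι → ι → M) :
    ∏ i, ∏ j ∈ univ.filter (· < i), F i j = ∏ i, ∏ j ∈ univ.filter (i < ·), F j i :=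
  prod_comm' (by simp)

theorem prod_prod_eq_prod_filter_lt_mul {ι M : Type*} [Fintype ι] [LinearOrder ι] [CommMonoid M]
    (F : ι → ι → M) :
    ∏ i, ∏ j, F i j = (∏ i, ∏ j ∈ univ.filter (i < ·), F i j * F j i) * ∏ i, F i i := by
  have hrow : ∀ i, ∏ j, F i j = (∏ j ∈ univ.filter (i < ·), F i j) *
      (∏ j ∈ univ.filter (· < i), F i j) * ∏ j, if i = j then F i j else 1 := by
    intro i
    rw [prod_filter, prod_filter, ← prod_mul_distrib, ← prod_mul_distrib]
    refine prod_congr rfl fun j _ => ?_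
    rcases lt_trichotomy i j with h | rfl | h
    · simp [h, h.ne, h.not_gt]
    · simp
    · simp [h, h.ne', h.not_gt]
  simp only [hrow, prod_mul_distrib, prod_ite_eq, mem_univ, if_true, prod_prod_filter_lt_swap]

section Rational

variable (c a b : ℂ)

theorem gg_swap : gg c b a = -gg c a b := by
  rw [gg, gg, ← neg_sub, div_neg]

theorem gg_sub_sub : gg c (a - c) (b - c) = gg c a b := by
  rw [gg, gg, sub_sub_sub_cancel_right]

theorem gg_sub_left_mul_ff (hab : a ≠ b) (hac : a - b ≠ c) :
    gg c (a - c) b * ff c b a = gg c a b := by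
  have h₁ : a - b ≠ 0 := sub_ne_zero.mpr hab
  have h₂ : b - a ≠ 0 := sub_ne_zero.mpr hab.symm
  have h₃ : a - c - b ≠ 0 := fun h => hac (by linear_combination h)
  rw [gg, gg, ff]
  field_simp
  ring

theorem gg_sub_right_mul_ff (hab : a ≠ b) (hbc : b - a ≠ c) :
    gg c a (b - c) * ff c a b = gg c a b := by
  have h₁ : a - b ≠ 0 := sub_ne_zero.mpr hab
  have h₃ : a - (b - c) ≠ 0 := fun h => hbc (by linear_combination -h)
  rw [gg, gg, ff]
  field_simp
  ring

theorem hh_sub_left_mul_ff (hab : a ≠ b) : hh c (a - c) b * ff c b a = -hh c b a := by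
  have h₂ : b - a ≠ 0 := sub_ne_zero.mpr hab.symm
  rw [hh, hh, ff]
  field_simp
  ring

theorem tt_sub_left : tt c (a - c) b = tt c b a := by
  rw [tt, tt, gg, gg, hh, hh, div_div_eq_mul_div, div_div_eq_mul_div, div_mul_eq_mul_div,
    div_mul_eq_mul_div, div_div, div_div]
  congr 1
  ring

end Rational

section Products

variable {m : ℕ} (c : ℂ)

theorem prod_gg_gt_mul_prod_gg_lt_comm (x y : Fin m → ℂ) :
    (∏ j, ∏ k ∈ univ.filter (fun k => k < j), gg c (x j) (x k)) *
      (∏ j, ∏ k ∈ univ.filter (fun k => j < k), gg c (y j) (y k)) =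
    (∏ j, ∏ k ∈ univ.filter (fun k => j < k), gg c (x j) (x k)) *
      (∏ j, ∏ k ∈ univ.filter (fun k => k < j), gg c (y j) (y k)) := by
  rw [prod_prod_filter_lt_swap, prod_prod_filter_lt_swap, ← prod_mul_distrib, ← prod_mul_distrib]
  refine prod_congr rfl fun j _ => ?_
  rw [← prod_mul_distrib, ← prod_mul_distrib]
  refine prod_congr rfl fun k _ => ?_
  rw [gg_swap c (x j), gg_swap c (y j)]
  ring

theorem prod_gg_shift_mul_prod_ff (w : Fin m → ℂ) (S : Finset (Fin m))
    (hw : Function.Injective w) (hwc : ∀ k k', k ≠ k' → w k - w k' ≠ c) :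
    (∏ j, ∏ k ∈ univ.filter (fun k => j < k),
        gg c (if j ∈ S then w j - c else w j) (if k ∈ S then w k - c else w k)) *
      (∏ i ∈ Sᶜ, ∏ i' ∈ S, ff c (w i) (w i')) =
    ∏ j, ∏ k ∈ univ.filter (fun k => j < k), gg c (w j) (w k) := by
  have hcross : ∏ i ∈ Sᶜ, ∏ i' ∈ S, ff c (w i) (w i') =
      ∏ i, ∏ i', if i ∉ S ∧ i' ∈ S then ff c (w i) (w i') else 1 := by
    rw [← Fintype.prod_ite_mem]
    refine prod_congr rfl fun i _ => ?_
    rw [← Fintype.prod_ite_mem]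
    by_cases hi : i ∈ S <;> simp [hi]
  rw [hcross, prod_prod_eq_prod_filter_lt_mul]
  simp only [not_and_self_iff, if_false, prod_const_one, mul_one]
  rw [← prod_mul_distrib]
  refine prod_congr rfl fun j _ => ?_
  rw [← prod_mul_distrib]
  refine prod_congr rfl fun k hk => ?_
  have hjk : j ≠ k := (mem_filter.mp hk).2.ne
  by_cases hj : j ∈ S <;> by_cases hk : k ∈ S <;> simp only [hj, hk, if_true, if_false,
    not_true, not_false_eq_true, and_true, and_false, mul_one, one_mul]
  · exact gg_sub_sub c (w j) (w k)
  · exact gg_sub_left_mul_ff c (w j) (w k) (hw.ne hjk) (hwc j k hjk)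
  · exact gg_sub_right_mul_ff c (w j) (w k) (hw.ne hjk) (hwc k j hjk.symm)

theorem prod_hh_shift_mul_prod_ff (w ξ : Fin m → ℂ) (S : Finset (Fin m))
    (hwξ : ∀ k j, w k - ξ j ≠ 0) :
    (∏ j, ∏ l, hh c (if j ∈ S then w j - c else w j) (ξ l)) *
      (∏ j, ∏ i ∈ S, ff c (ξ j) (w i)) =
    (∏ k ∈ Sᶜ, ∏ l, hh c (w k) (ξ l)) * ∏ k ∈ S, ((-1) ^ m * ∏ l, hh c (ξ l) (w k)) := by
  rw [prod_comm (f := fun j i => ff c (ξ j) (w i)), ← prod_compl_mul_prod S, mul_assoc,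
    ← prod_mul_distrib]
  congr 1
  · exact prod_congr rfl fun k hk => by rw [if_neg (mem_compl.mp hk)]
  · refine prod_congr rfl fun k hk => ?_
    rw [if_pos hk, ← prod_mul_distrib]
    simp only [hh_sub_left_mul_ff c _ _ (sub_ne_zero.mp (hwξ k _)), prod_neg, card_univ,
      Fintype.card_fin]

theorem KK_shift_mul_prod_ff (w ξ : Fin m → ℂ) (S : Finset (Fin m))
    (hw : Function.Injective w) (hwξ : ∀ k j, w k - ξ j ≠ 0)
    (hwc : ∀ k k', k ≠ k' → w k - w k' ≠ c) :
    KK c (fun i => if i ∈ S then w i - c else w i) ξ * (∏ j, ∏ i ∈ S, ff c (ξ j) (w i)) *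
        (∏ i ∈ Sᶜ, ∏ i' ∈ S, ff c (w i) (w i')) =
      (∏ j, ∏ k ∈ univ.filter (fun k => j < k), gg c (ξ j) (ξ k)) *
        (∏ j, ∏ k ∈ univ.filter (fun k => k < j), gg c (w j) (w k)) *
        ((∏ k ∈ Sᶜ, ∏ l, hh c (w k) (ξ l)) * ∏ k ∈ S, ((-1) ^ m * ∏ l, hh c (ξ l) (w k))) *
        (Matrix.of fun k j => if k ∈ S then tt c (ξ j) (w k) else tt c (w k) (ξ j)).det := by
  have hdet : (Matrix.of fun j k => tt c (if j ∈ S then w j - c else w j) (ξ k)) =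
      Matrix.of fun k j => if k ∈ S then tt c (ξ j) (w k) else tt c (w k) (ξ j) := by
    ext k j
    by_cases hk : k ∈ S <;> simp [hk, tt_sub_left]
  simp only [KK]
  rw [hdet, ← prod_gg_gt_mul_prod_gg_lt_comm c ξ w, ← prod_gg_shift_mul_prod_ff c w S hw hwc,
    ← prod_hh_shift_mul_prod_ff c w ξ S hwξ]
  ring

end Products

theorem weighted_partition_det_general (c : ℂ) (m : ℕ)
    (w ξ : Fin m → ℂ) (C1 C2 : ℂ → ℂ)
    (hw : Function.Injective w)
    (h1 : ∀ k j, w k - ξ j ≠ 0)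
    (h4 : ∀ k k', k ≠ k' → w k - w k' ≠ c) :
    ∑ S : Finset (Fin m),
        KK c (fun i => if i ∈ S then w i - c else w i) ξ *
        (∏ j, ∏ i ∈ S, ff c (ξ j) (w i)) *
        (∏ i ∈ Sᶜ, ∏ i' ∈ S, ff c (w i) (w i')) *
        (∏ i ∈ S, C1 (w i)) * (∏ i ∈ Sᶜ, C2 (w i)) =
      (∏ j, ∏ k ∈ univ.filter (fun k => j < k), gg c (ξ j) (ξ k)) *
      (∏ j, ∏ k ∈ univ.filter (fun k => k < j), gg c (w j) (w k)) *
      Matrix.det (Matrix.of fun j k =>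
        C2 (w k) * tt c (w k) (ξ j) * (∏ l, hh c (w k) (ξ l)) +
        (-1 : ℂ) ^ m * C1 (w k) * tt c (ξ j) (w k) * (∏ l, hh c (ξ l) (w k))) := by
  have htranspose : (Matrix.of fun j k =>
        C2 (w k) * tt c (w k) (ξ j) * (∏ l, hh c (w k) (ξ l)) +
        (-1 : ℂ) ^ m * C1 (w k) * tt c (ξ j) (w k) * (∏ l, hh c (ξ l) (w k))) =
      Matrix.transpose (Matrix.of fun k j =>
        (C1 (w k) * ((-1) ^ m * ∏ l, hh c (ξ l) (w k))) * tt c (ξ j) (w k) +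
        (C2 (w k) * ∏ l, hh c (w k) (ξ l)) * tt c (w k) (ξ j)) := by
    ext j k
    simp only [Matrix.transpose_apply, Matrix.of_apply]
    ring
  rw [htranspose, Matrix.det_transpose, Matrix.det_of_mul_add_mul_eq_sum, mul_sum]
  refine sum_congr rfl fun S _ => ?_
  rw [KK_shift_mul_prod_ff c w ξ S hw h1 h4]
  simp only [prod_mul_distrib]
  ring

theorem weighted_partition_det (c : ℂ) (hc : c ≠ 0) (m : ℕ)
    (w ξ : Fin m → ℂ) (C1 C2 : ℂ → ℂ)
    (hw : Function.Injective w) (hξ : Function.Injective ξ)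
    (h1 : ∀ k j, w k - ξ j ≠ 0) (h2 : ∀ k j, w k - ξ j + c ≠ 0)
    (h3 : ∀ k j, w k - ξ j - c ≠ 0)
    (h4 : ∀ k k', k ≠ k' → w k - w k' ≠ c) :
    ∑ S : Finset (Fin m),
        KK c (fun i => if i ∈ S then w i - c else w i) ξ *
        (∏ j, ∏ i ∈ S, ff c (ξ j) (w i)) *
        (∏ i ∈ Sᶜ, ∏ i' ∈ S, ff c (w i) (w i')) *
        (∏ i ∈ S, C1 (w i)) * (∏ i ∈ Sᶜ, C2 (w i)) =
      (∏ j, ∏ k ∈ univ.filter (fun k => j < k), gg c (ξ j) (ξ k)) *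
      (∏ j, ∏ k ∈ univ.filter (fun k => k < j), gg c (w j) (w k)) *
      Matrix.det (Matrix.of fun j k =>
        C2 (w k) * tt c (w k) (ξ j) * (∏ l, hh c (w k) (ξ l)) +
        (-1 : ℂ) ^ m * C1 (w k) * tt c (ξ j) (w k) * (∏ l, hh c (ξ l) (w k))) :=
  weighted_partition_det_general c m w ξ C1 C2 hw h1 h4
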